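/- In the three-type mixture model, if λ > 0 and P^C > 0, then the population conditional expectation of reported health E[H^s | X] has a strictly positive jump discontinuity at m*; conversely, if λ = 0 and f0, f1 have equal one-sided limits at m*, then E[H^s | X] is continuous at m* (its one-sided limits at m* agree), regardless of the type proportions. -/

import Mathlib

/-!
On either side of `m*` the mixture coincides with a function continuous at `m*`; the two
functions differ by `P^C (f1 + λ - f0)`, which at `m*` equals `P^C λ` because `f0` and `f1`
share the value `L` there.
-/

open Filter Topology

section Piecewise

variable {α β : Type*} [TopologicalSpace α] [Preorder α] [DecidableLT α] [TopologicalSpace β]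
  {g h : α → β} {a : α} {b : β}

theorem tendsto_ite_lt_nhdsGT (hg : Tendsto g (𝓝[>] a) (𝓝 b)) :
    Tendsto (fun x => if a < x then g x else h x) (𝓝[>] a) (𝓝 b) :=
  hg.congr' <| eventually_nhdsWithin_of_forall fun _ hx => (if_pos hx).symm

theorem tendsto_ite_lt_nhdsLT (hh : Tendsto h (𝓝[<] a) (𝓝 b)) :
    Tendsto (fun x => if a < x then g x else h x) (𝓝[<] a) (𝓝 b) :=
  hh.congr' <| eventually_nhdsWithin_of_forall fun _ hx => (if_neg (not_lt_of_gt hx)).symm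

end Piecewise

theorem mixture_jump_positive_iff_bias_general
    (f0 f1 : ℝ → ℝ) (mstar L lam PN PA PC : ℝ)
    (hc0 : ContinuousAt f0 mstar) (hc1 : ContinuousAt f1 mstar)
    (h0 : f0 mstar = L) (h1 : f1 mstar = L)
    (EHs : ℝ → ℝ)
    (hEHs : ∀ x, EHs x =
      PN * f0 x + PA * (f1 x + lam) +
        PC * (if mstar < x then f1 x + lam else f0 x)) :
    (0 < lam → 0 < PC →
      ∃ A B : ℝ,
        Tendsto EHs (𝓝[>] mstar) (𝓝 A) ∧
        Tendsto EHs (𝓝[<] mstar) (𝓝 B) ∧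
        0 < A - B) ∧
    (lam = 0 →
      ∃ A : ℝ,
        Tendsto EHs (𝓝[>] mstar) (𝓝 A) ∧
        Tendsto EHs (𝓝[<] mstar) (𝓝 A)) := by
  have hf0 : ∀ s, Tendsto f0 (𝓝[s] mstar) (𝓝 L) := fun _ =>
    h0 ▸ hc0.tendsto.mono_left nhdsWithin_le_nhds
  have hf1 : ∀ s, Tendsto (f1 · + lam) (𝓝[s] mstar) (𝓝 (L + lam)) := fun _ =>
    h1 ▸ (hc1.tendsto.mono_left nhdsWithin_le_nhds).add_const lam
  have hmix : ∀ s c,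
      Tendsto (fun x => if mstar < x then f1 x + lam else f0 x) (𝓝[s] mstar) (𝓝 c) →
      Tendsto EHs (𝓝[s] mstar) (𝓝 (PN * L + PA * (L + lam) + PC * c)) := fun s _ hc =>
    ((((hf0 s).const_mul PN).add ((hf1 s).const_mul PA)).add (hc.const_mul PC)).congr
      fun x => (hEHs x).symm
  have hright := hmix (Set.Ioi mstar) _ (tendsto_ite_lt_nhdsGT (hf1 _))
  have hleft := hmix (Set.Iio mstar) _ (tendsto_ite_lt_nhdsLT (hf0 _))
  refine ⟨fun hlam hPC => ⟨_, _, hright, hleft, ?_⟩, fun hlam => ⟨_, hright, ?_⟩⟩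
  · have hjump : PN * L + PA * (L + lam) + PC * (L + lam) - (PN * L + PA * (L + lam) + PC * L)
        = PC * lam := by ring
    exact hjump ▸ mul_pos hPC hlam
  · simpa [hlam] using hleft

/-- In the three-type mixture model, if `λ > 0` and `P^C > 0`, then the population
conditional expectation of reported health has a strictly positive jump at `m*`; conversely, if
`λ = 0` (with `f0, f1` continuous at `m*` and having equal one-sided limits there), then the
population conditional expectation is continuous at `m*` — its one-sided limits agree —
regardless of the type proportions. -/
theorem mixture_jump_positive_iff_bias
    (f0 f1 : ℝ → ℝ) (mstar L lam PN PA PC : ℝ)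
    (hPN : 0 ≤ PN) (hPA : 0 ≤ PA) (hPC : 0 ≤ PC)
    (hsum : PN + PA + PC = 1)
    (hc0 : ContinuousAt f0 mstar) (hc1 : ContinuousAt f1 mstar)
    (h0 : f0 mstar = L) (h1 : f1 mstar = L)
    (EHs : ℝ → ℝ)
    (hEHs : ∀ x, EHs x =
      PN * f0 x + PA * (f1 x + lam) +
        PC * (if mstar < x then f1 x + lam else f0 x)) :
    (0 < lam → 0 < PC →
      ∃ A B : ℝ,
        Tendsto EHs (𝓝[>] mstar) (𝓝 A) ∧
        Tendsto EHs (𝓝[<] mstar) (𝓝 B) ∧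
        0 < A - B) ∧
    (lam = 0 →
      ∃ A : ℝ,
        Tendsto EHs (𝓝[>] mstar) (𝓝 A) ∧
        Tendsto EHs (𝓝[<] mstar) (𝓝 A)) :=
  mixture_jump_positive_iff_bias_general f0 f1 mstar L lam PN PA PC hc0 hc1 h0 h1 EHs hEHs
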